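/- arXiv:1705.05346 — 2 statements merged into one kernel-verified Lean document; each statement's English description precedes it below -/
import Mathlib

section
/- Let N and k be positive integers with k < N, and let 0 < p < 1. Then there is no lower semicontinuous function u : ℝ^N → ℝ with u(x) > 0 for every x which is a viscosity supersolution of P⁻_k(D²u) + u^p = 0 in ℝ^N. -/
open scoped BigOperators

/-- The eigenvalues of a symmetric real matrix, listed in nondecreasing order with
multiplicity (junk value `0` if the matrix is not Hermitian). -/
noncomputable def sortedEig {n : ℕ} (A : Matrix (Fin n) (Fin n) ℝ) : Fin n → ℝ :=
  if h : A.IsHermitian then h.eigenvalues ∘ Tuple.sort h.eigenvalues else 0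

/-- `P⁻_k(A)`: the sum of the `k` smallest eigenvalues of `A`. -/
noncomputable def Pminus {n : ℕ} (k : ℕ) (A : Matrix (Fin n) (Fin n) ℝ) : ℝ :=
  ∑ i : Fin n, if (i : ℕ) < k then sortedEig A i else 0

/-- `P⁺_k(A)`: the sum of the `k` largest eigenvalues of `A`. -/
noncomputable def Pplus {n : ℕ} (k : ℕ) (A : Matrix (Fin n) (Fin n) ℝ) : ℝ :=
  ∑ i : Fin n, if n - k ≤ (i : ℕ) then sortedEig A i else 0

/-- The Hessian matrix `D²u(x)` of `u : ℝ^N → ℝ` at `x`. -/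
noncomputable def hessianMatrix {N : ℕ} (u : EuclideanSpace ℝ (Fin N) → ℝ)
    (x : EuclideanSpace ℝ (Fin N)) : Matrix (Fin N) (Fin N) ℝ :=
  fun i j => iteratedFDeriv ℝ 2 u x ![EuclideanSpace.single i 1, EuclideanSpace.single j 1]

/-- `u` is a viscosity supersolution of `F(D²u) + g(u) = 0` in `Ω`. -/
def IsViscositySupersolution {N : ℕ} (F : Matrix (Fin N) (Fin N) ℝ → ℝ) (g : ℝ → ℝ)
    (Ω : Set (EuclideanSpace ℝ (Fin N))) (u : EuclideanSpace ℝ (Fin N) → ℝ) : Prop :=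
  ∀ x₀ ∈ Ω, ∀ φ : EuclideanSpace ℝ (Fin N) → ℝ, ContDiff ℝ 2 φ →
    IsLocalMinOn (fun x => u x - φ x) Ω x₀ →
      F (hessianMatrix φ x₀) + g (u x₀) ≤ 0

/-- `u` is a viscosity subsolution of `F(D²u) + g(u) = 0` in `Ω`. -/
def IsViscositySubsolution {N : ℕ} (F : Matrix (Fin N) (Fin N) ℝ → ℝ) (g : ℝ → ℝ)
    (Ω : Set (EuclideanSpace ℝ (Fin N))) (u : EuclideanSpace ℝ (Fin N) → ℝ) : Prop :=
  ∀ x₀ ∈ Ω, ∀ φ : EuclideanSpace ℝ (Fin N) → ℝ, ContDiff ℝ 2 φ →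
    IsLocalMaxOn (fun x => u x - φ x) Ω x₀ →
      0 ≤ F (hessianMatrix φ x₀) + g (u x₀)

/-- `u` is a viscosity solution of `F(D²u) + g(u) = 0` in `Ω`. -/
def IsViscositySolution {N : ℕ} (F : Matrix (Fin N) (Fin N) ℝ → ℝ) (g : ℝ → ℝ)
    (Ω : Set (EuclideanSpace ℝ (Fin N))) (u : EuclideanSpace ℝ (Fin N) → ℝ) : Prop :=
  IsViscositySubsolution F g Ω u ∧ IsViscositySupersolution F g Ω u

/-!
Slide the multiples `θ • (1 - ε‖x‖²)^(2n+1)` of an odd-power bump under `u` until one touches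
it from below at some `x₀`; this is possible because `u` is lower semicontinuous and positive
while the bump is nonpositive off a compact set. The Hessian of a radial function `g(‖x‖²)` is
`4g'' xxᵀ + 2g' I`, so where `g'' ≥ 0` all its eigenvalues are at least `2g'`, and the
supersolution inequality at `x₀` yields `θ^p ≤ 2k(2n+1)εθ` as soon as `(2n+1)p ≤ 2n`.
Since `θ ≤ u 0`, this forces `1 ≤ 2k(2n+1)ε u(0)^(1-p)`, which fails for small `ε`.
-/

open Matrix Filter
open scoped RealInnerProductSpace

lemma Matrix.IsHermitian.le_eigenvalues_of_posSemidef_sub {n : Type*} [Fintype n] [DecidableEq n]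
    {A : Matrix n n ℝ} (hA : A.IsHermitian) {c : ℝ} (h : (A - c • 1).PosSemidef) (i : n) :
    c ≤ hA.eigenvalues i := by
  have hmem : hA.eigenvalues i ∈ spectrum ℝ (algebraMap ℝ _ c + (A - c • 1)) := by
    rw [Algebra.algebraMap_eq_smul_one, add_sub_cancel, hA.spectrum_real_eq_range_eigenvalues]
    exact ⟨i, rfl⟩
  rw [← spectrum.vadd_eq, h.1.spectrum_real_eq_range_eigenvalues] at hmem
  obtain ⟨_, ⟨j, rfl⟩, hj⟩ := hmem
  simp only [vadd_eq_add] at hj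
  linarith [h.eigenvalues_nonneg j]

lemma min_mul_le_Pminus {n : ℕ} (k : ℕ) {A : Matrix (Fin n) (Fin n) ℝ} (hA : A.IsHermitian)
    {c : ℝ} (h : ∀ i, c ≤ hA.eigenvalues i) : (min n k : ℕ) * c ≤ Pminus k A := by
  have hsort : ∀ i, c ≤ sortedEig A i := fun i => by
    simp only [sortedEig, dif_pos hA, Function.comp_apply, h]
  calc ((min n k : ℕ) : ℝ) * c = ∑ i : Fin n, if (i : ℕ) < k then c else 0 := by
        rw [Finset.sum_ite, Finset.sum_const_zero, add_zero, Finset.sum_const,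
          Fin.card_filter_val_lt, nsmul_eq_mul]
    _ ≤ Pminus k A := Finset.sum_le_sum fun i _ => by
        split_ifs
        · exact hsort i
        · rfl

lemma min_mul_le_Pminus_smul_vecMulVec_add {n : ℕ} (k : ℕ) {β : ℝ} (hβ : 0 ≤ β)
    (v : Fin n → ℝ) (c : ℝ) : (min n k : ℕ) * c ≤ Pminus k (β • vecMulVec v v + c • 1) := by
  have hpsd : (β • vecMulVec v v + c • 1 - c • 1 : Matrix (Fin n) (Fin n) ℝ).PosSemidef := by
    simpa using (posSemidef_vecMulVec_self_star v).smul hβ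
  have hA : (β • vecMulVec v v + c • 1 : Matrix (Fin n) (Fin n) ℝ).IsHermitian := by
    simpa using hpsd.1.add (isHermitian_one.smul (IsSelfAdjoint.all c))
  exact min_mul_le_Pminus k hA (hA.le_eigenvalues_of_posSemidef_sub hpsd)

/-- `innerSL ℝ` is typed as a conjugate-linear map; retyped as a linear one it can be
differentiated. -/
noncomputable def realInnerSL (E : Type*) [NormedAddCommGroup E] [InnerProductSpace ℝ E] :
    E →L[ℝ] E →L[ℝ] ℝ :=
  innerSL ℝ

@[simp]
lemma realInnerSL_apply_apply {E : Type*} [NormedAddCommGroup E] [InnerProductSpace ℝ E]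
    (v w : E) : realInnerSL E v w = ⟪v, w⟫ :=
  rfl

lemma hessianMatrix_comp_norm_sq {N : ℕ} {g g' g'' : ℝ → ℝ}
    (hg : ∀ t, HasDerivAt g (g' t) t) (hg' : ∀ t, HasDerivAt g' (g'' t) t)
    (x : EuclideanSpace ℝ (Fin N)) :
    hessianMatrix (fun y => g (‖y‖ ^ 2)) x =
      (4 * g'' (‖x‖ ^ 2)) • vecMulVec ⇑x ⇑x + (2 * g' (‖x‖ ^ 2)) • 1 := by
  have hnorm : ∀ y : EuclideanSpace ℝ (Fin N),
      HasFDerivAt (fun y => ‖y‖ ^ 2) (2 • innerSL ℝ y) y :=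
    fun y => (hasStrictFDerivAt_norm_sq y).hasFDerivAt
  have hfirst : ∀ y : EuclideanSpace ℝ (Fin N),
      HasFDerivAt (fun y => g (‖y‖ ^ 2)) ((2 * g' (‖y‖ ^ 2)) • innerSL ℝ y) y := fun y => by
    refine ((hg _).comp_hasFDerivAt y (hnorm y)).congr_fderiv ?_
    ext v
    simp only [_root_.smul_apply, coe_innerSL_apply, nsmul_eq_mul, Nat.cast_ofNat, smul_eq_mul]
    ring
  have hsecond : HasFDerivAt (fun y => (2 * g' (‖y‖ ^ 2)) • innerSL ℝ y)
      ((2 * g' (‖x‖ ^ 2)) • realInnerSL _ +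
        ((2 * g'' (‖x‖ ^ 2)) • (2 • innerSL ℝ x)).smulRight (innerSL ℝ x)) x :=
    (((hg' _).const_mul 2).comp_hasFDerivAt x (hnorm x)).smul (realInnerSL _).hasFDerivAt
  ext i j
  simp only [hessianMatrix, iteratedFDeriv_two_apply, funext fun y => (hfirst y).fderiv,
    hsecond.fderiv]
  simp only [_root_.add_apply, _root_.smul_apply,
    ContinuousLinearMap.smulRight_apply, realInnerSL_apply_apply, innerSL_apply_apply,
    EuclideanSpace.inner_single_right, PiLp.single_apply,
    Matrix.add_apply, Matrix.smul_apply, vecMulVec_apply, Matrix.one_apply, smul_eq_mul,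
    nsmul_eq_mul, Matrix.cons_val_zero, Matrix.cons_val_one, starRingEnd_apply, star_trivial,
    one_mul, Nat.cast_ofNat, eq_comm (a := j)]
  ring

lemma LowerSemicontinuous.exists_const_mul_touching {X : Type*} [TopologicalSpace X] {u w : X → ℝ}
    (hu : LowerSemicontinuous u) (hu_pos : ∀ x, 0 < u x) (hw : Continuous w)
    (hw_cocompact : ∀ᶠ x in cocompact X, w x ≤ 0) {z : X} (hz : 0 < w z) :
    ∃ θ > 0, ∃ x₀, (∀ x, θ * w x ≤ u x) ∧ θ * w x₀ = u x₀ := by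
  obtain ⟨K, hK, hwK⟩ := (hasBasis_cocompact.eventually_iff).1 hw_cocompact
  have hzK : z ∈ K := by_contra fun h => (hwK h).not_gt hz
  obtain ⟨M, hM⟩ := hK.bddAbove_image hw.continuousOn
  have hwM : ∀ x ∈ K, w x ≤ M := fun x hx => hM ⟨x, hx, rfl⟩
  have hM_pos : 0 < M := hz.trans_le (hwM z hzK)
  set S : Set ℝ := Set.Ici 0 ∩ ⋂ x, {θ | θ * w x ≤ u x} with hS
  have hS_mem {θ : ℝ} : θ ∈ S ↔ 0 ≤ θ ∧ ∀ x, θ * w x ≤ u x := by simp [hS]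
  have hS_closed : IsClosed S := isClosed_Ici.inter
    (isClosed_iInter fun x => isClosed_le (continuous_id.mul continuous_const) continuous_const)
  have hS_bdd : BddAbove S := ⟨u z / w z, fun θ hθ => (le_div_iff₀ hz).2 ((hS_mem.1 hθ).2 z)⟩
  have h0S : (0 : ℝ) ∈ S := hS_mem.2 ⟨le_rfl, fun x => by simpa using (hu_pos x).le⟩
  have hθS : sSup S ∈ S := hS_closed.csSup_mem ⟨0, h0S⟩ hS_bdd
  obtain ⟨hθ_nonneg, hθ_le⟩ := hS_mem.1 hθS
  obtain ⟨x₀, hx₀⟩ : ∃ x₀, sSup S * w x₀ = u x₀ := by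
    by_contra! hne
    have hlt : ∀ x, sSup S * w x < u x := fun x => (hθ_le x).lt_of_ne (hne x)
    obtain ⟨x₂, hx₂K, hx₂⟩ := ((hu.add (hw.const_mul (sSup S)).neg.lowerSemicontinuous)
      |>.lowerSemicontinuousOn K).exists_isMinOn ⟨z, hzK⟩ hK
    set η := u x₂ + -(sSup S * w x₂)
    have hη : 0 < η := by linarith [hlt x₂]
    have hmem : sSup S + η / M ∈ S := by
      refine hS_mem.2 ⟨by positivity, fun x => ?_⟩
      by_cases hx : x ∈ K
      · have hmin : η ≤ u x + -(sSup S * w x) := hx₂ hx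
        have : η / M * w x ≤ η := by
          rw [div_mul_eq_mul_div, div_le_iff₀ hM_pos]
          exact mul_le_mul_of_nonneg_left (hwM x hx) hη.le
        linarith
      · have : (sSup S + η / M) * w x ≤ 0 :=
          mul_nonpos_of_nonneg_of_nonpos (by positivity) (hwK hx)
        linarith [hu_pos x]
    linarith [le_csSup hS_bdd hmem, div_pos hη hM_pos]
  refine ⟨sSup S, hθ_nonneg.lt_of_ne fun h => ?_, x₀, hθ_le, hx₀⟩
  rw [← h, zero_mul] at hx₀
  exact (hu_pos x₀).ne hx₀

lemma IsViscositySupersolution.min_mul_two_mul_deriv_add_le_zero {N k : ℕ} {f : ℝ → ℝ}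
    {u : EuclideanSpace ℝ (Fin N) → ℝ} (hu : IsViscositySupersolution (Pminus k) f Set.univ u)
    {g g' g'' : ℝ → ℝ} (hg_smooth : ContDiff ℝ 2 g) (hg : ∀ t, HasDerivAt g (g' t) t)
    (hg' : ∀ t, HasDerivAt g' (g'' t) t) {x₀ : EuclideanSpace ℝ (Fin N)}
    (hg''_nonneg : 0 ≤ g'' (‖x₀‖ ^ 2))
    (hmin : IsLocalMinOn (fun x => u x - g (‖x‖ ^ 2)) Set.univ x₀) :
    (min N k : ℕ) * (2 * g' (‖x₀‖ ^ 2)) + f (u x₀) ≤ 0 := by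
  have h := hu x₀ (Set.mem_univ x₀) (fun x => g (‖x‖ ^ 2))
    (hg_smooth.comp (contDiff_norm_sq ℝ)) hmin
  rw [hessianMatrix_comp_norm_sq hg hg'] at h
  linarith [min_mul_le_Pminus_smul_vecMulVec_add k (by positivity : 0 ≤ 4 * g'' (‖x₀‖ ^ 2))
    x₀ (2 * g' (‖x₀‖ ^ 2))]

lemma rpow_mul_pow_le_mul_pow_rpow {θ q p : ℝ} (hθ : 0 ≤ θ) (hq₀ : 0 < q) (hq₁ : q ≤ 1)
    {j m : ℕ} (hjm : (m : ℝ) * p ≤ j) : θ ^ p * q ^ j ≤ (θ * q ^ m) ^ p := by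
  rw [Real.mul_rpow hθ (by positivity), ← Real.rpow_natCast q m, ← Real.rpow_mul hq₀.le,
    ← Real.rpow_natCast q j]
  exact mul_le_mul_of_nonneg_left (Real.rpow_le_rpow_of_exponent_ge hq₀ hq₁ hjm)
    (Real.rpow_nonneg hθ p)

noncomputable def bump {N : ℕ} (ε : ℝ) (m : ℕ) (x : EuclideanSpace ℝ (Fin N)) : ℝ :=
  (1 - ε * ‖x‖ ^ 2) ^ m

@[simp]
lemma bump_zero {N : ℕ} (ε : ℝ) (m : ℕ) : bump ε m (0 : EuclideanSpace ℝ (Fin N)) = 1 := by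
  simp [bump]

lemma continuous_bump {N : ℕ} (ε : ℝ) (m : ℕ) :
    Continuous (bump (N := N) ε m) := by
  unfold bump
  fun_prop

lemma eventually_cocompact_bump_nonpos {N : ℕ} {ε : ℝ} (hε : 0 < ε) {m : ℕ} (hm : Odd m) :
    ∀ᶠ x in cocompact (EuclideanSpace ℝ (Fin N)), bump ε m x ≤ 0 := by
  filter_upwards [tendsto_norm_cocompact_atTop.eventually_ge_atTop (1 / ε + 1)] with x hx
  have hεx : 1 + ε ≤ ε * ‖x‖ := by
    calc 1 + ε = ε * (1 / ε + 1) := by field_simp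
      _ ≤ ε * ‖x‖ := mul_le_mul_of_nonneg_left hx hε.le
  have hx₁ : 1 ≤ ‖x‖ := le_trans (by simp [hε.le]) hx
  refine hm.pow_nonpos ?_
  nlinarith

lemma IsViscositySupersolution.rpow_le_of_touching_bump {N k : ℕ} {p : ℝ}
    {u : EuclideanSpace ℝ (Fin N) → ℝ}
    (hu : IsViscositySupersolution (Pminus k) (fun t => t ^ p) Set.univ u)
    (hu_pos : ∀ x, 0 < u x) {n : ℕ} (hnp : ((2 * n + 1 : ℕ) : ℝ) * p ≤ (2 * n : ℕ))
    {ε θ : ℝ} (hε : 0 < ε) (hθ : 0 < θ) {x₀ : EuclideanSpace ℝ (Fin N)}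
    (hle : ∀ x, θ * bump ε (2 * n + 1) x ≤ u x) (heq : θ * bump ε (2 * n + 1) x₀ = u x₀) :
    θ ^ p ≤ 2 * k * (2 * n + 1) * ε * θ := by
  set q := 1 - ε * ‖x₀‖ ^ 2
  have hq_pos : 0 < q := (odd_two_mul_add_one n).pow_pos_iff.1
    (pos_of_mul_pos_right (heq ▸ hu_pos x₀) hθ.le)
  have hq_le : q ≤ 1 := sub_le_self _ (by positivity)
  have hbase : ∀ t : ℝ, HasDerivAt (fun t => 1 - ε * t) (-ε) t := fun t => by
    simpa using ((hasDerivAt_id t).const_mul ε).const_sub 1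
  have hg : ∀ t : ℝ, HasDerivAt (fun t => θ * (1 - ε * t) ^ (2 * n + 1))
      (-(θ * (2 * n + 1) * ε) * (1 - ε * t) ^ (2 * n)) t := fun t => by
    refine (((hbase t).fun_pow (2 * n + 1)).const_mul θ).congr_deriv ?_
    rw [Nat.add_sub_cancel]
    push_cast
    ring
  have hg' : ∀ t : ℝ, HasDerivAt (fun t => -(θ * (2 * n + 1) * ε) * (1 - ε * t) ^ (2 * n))
      (θ * (2 * n + 1) * (2 * n) * ε ^ 2 * (1 - ε * t) ^ (2 * n - 1)) t := fun t => by
    refine (((hbase t).fun_pow (2 * n)).const_mul (-(θ * (2 * n + 1) * ε))).congr_deriv ?_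
    push_cast
    ring
  have hmin : IsLocalMinOn (fun x => u x - θ * (1 - ε * ‖x‖ ^ 2) ^ (2 * n + 1)) Set.univ x₀ :=
    Filter.Eventually.of_forall fun x => by
      simpa [bump, ← heq] using hle x
  have key := hu.min_mul_two_mul_deriv_add_le_zero (by fun_prop) hg hg'
    (by positivity) hmin
  have hupper : u x₀ ^ p ≤ 2 * k * (2 * n + 1) * ε * θ * q ^ (2 * n) := by
    have hmin_le : ((min N k : ℕ) : ℝ) ≤ k := Nat.cast_le.2 (min_le_right _ _)
    have hA : 0 ≤ θ * (2 * n + 1) * ε * q ^ (2 * n) := by positivity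
    linarith [mul_le_mul_of_nonneg_right hmin_le hA]
  have hlower : θ ^ p * q ^ (2 * n) ≤ u x₀ ^ p := by
    rw [← heq]
    exact rpow_mul_pow_le_mul_pow_rpow hθ.le hq_pos hq_le hnp
  exact le_of_mul_le_mul_right (hlower.trans hupper) (pow_pos hq_pos _)

lemma one_le_mul_rpow_one_sub_of_rpow_le {θ a p : ℝ} (hθ : 0 < θ) (h : θ ^ p ≤ a * θ) :
    1 ≤ a * θ ^ (1 - p) := by
  have hsplit : θ = θ ^ p * θ ^ (1 - p) := by
    rw [← Real.rpow_add hθ, add_sub_cancel, Real.rpow_one]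
  refine le_of_mul_le_mul_left ?_ (Real.rpow_pos_of_pos hθ p)
  calc θ ^ p * 1 ≤ a * θ := by rwa [mul_one]
    _ = θ ^ p * (a * θ ^ (1 - p)) := by nth_rewrite 1 [hsplit]; ring

theorem statement5_general (N k : ℕ) (p : ℝ) (hp1 : p < 1) :
    ¬ ∃ u : EuclideanSpace ℝ (Fin N) → ℝ, LowerSemicontinuous u ∧ (∀ x, 0 < u x) ∧
      IsViscositySupersolution (Pminus k) (fun t => t ^ p) Set.univ u := by
  rintro ⟨u, hu_lsc, hu_pos, hu⟩
  obtain ⟨n, hn⟩ := exists_nat_ge (1 / (1 - p))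
  have hnp : ((2 * n + 1 : ℕ) : ℝ) * p ≤ (2 * n : ℕ) := by
    rw [div_le_iff₀ (by linarith)] at hn
    push_cast
    linarith
  set C : ℝ := 2 * k * (2 * n + 1)
  have hC : 0 < C + 1 := by positivity
  have hu₀ : 0 < u 0 ^ (1 - p) := Real.rpow_pos_of_pos (hu_pos 0) _
  set ε := 1 / ((C + 1) * u 0 ^ (1 - p)) with hε_def
  have hε : 0 < ε := by positivity
  obtain ⟨θ, hθ, x₀, hle, heq⟩ := hu_lsc.exists_const_mul_touching hu_pos (continuous_bump ε _)
    (eventually_cocompact_bump_nonpos hε (odd_two_mul_add_one n)) (z := 0) (by simp)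
  have hθ_le : θ ≤ u 0 := by simpa using hle 0
  have hlower : 1 ≤ C * ε * θ ^ (1 - p) :=
    one_le_mul_rpow_one_sub_of_rpow_le hθ (hu.rpow_le_of_touching_bump hu_pos hnp hε hθ hle heq)
  have hupper : C * ε * θ ^ (1 - p) < 1 := calc
    C * ε * θ ^ (1 - p) ≤ C * ε * u 0 ^ (1 - p) := by gcongr
    _ = C / (C + 1) := by rw [hε_def]; field_simp
    _ < 1 := by rw [div_lt_one hC]; linarith
  linarith

theorem statement5 (N k : ℕ) (hk : 0 < k) (hkN : k < N) (p : ℝ) (hp0 : 0 < p) (hp1 : p < 1) :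
    ¬ ∃ u : EuclideanSpace ℝ (Fin N) → ℝ, LowerSemicontinuous u ∧ (∀ x, 0 < u x) ∧
      IsViscositySupersolution (Pminus k) (fun t => t ^ p) Set.univ u :=
  statement5_general N k p hp1
end

section
/- Strong minimum principle: let N and k be positive integers with k ≤ N, let Ω ⊆ ℝ^N be an open connected set, and let u : Ω → ℝ be lower semicontinuous and a viscosity supersolution of P⁺_k(D²u) = 0 in Ω. If u attains its infimum over Ω at some point of Ω, then u is constant. -/
open scoped BigOperators

/-! The minimum set `{u = u x₀}` has an open complement in `Ω` by lower semicontinuity, so by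
connectedness it suffices to show that it is open. Otherwise there is a ball `B(z, ρ) ⊆ Ω` on
which `u > m := u x₀` with a point `p` of its boundary sphere where `u p = m`. Subtracting the
barrier `ε exp(-α |x - z|²)` (with `α` large and `ε` small) from `u` gives a function with a local
minimum in the annulus `ρ / 2 < |x - z| ≤ ρ`, where the Hessian of the barrier has positive trace.
Since `k tr X ≤ N P⁺_k(X)`, this contradicts `P⁺_k(D²φ) ≤ 0`. -/

open Set Metric Topology Finset
open scoped RealInnerProductSpace

lemma LowerSemicontinuousOn.isOpen_inter_preimage_Ioi {X : Type*} [TopologicalSpace X]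
    {f : X → ℝ} {s : Set X} (hf : LowerSemicontinuousOn f s) (hs : IsOpen s) (b : ℝ) :
    IsOpen (s ∩ f ⁻¹' Ioi b) := by
  obtain ⟨t, ht, hst⟩ := lowerSemicontinuousOn_iff_preimage_Ioi.1 hf b
  exact hst ▸ hs.inter ht

section Metric

variable {X : Type*} [PseudoMetricSpace X] [ProperSpace X]

lemma IsOpen.exists_maximal_ball_subset {V : Set X} (hV : IsOpen V) {z y : X} (hz : z ∈ V)
    (hy : y ∉ V) : ∃ ρ, 0 < ρ ∧ ρ ≤ dist z y ∧ ball z ρ ⊆ V ∧ ∃ p ∈ sphere z ρ, p ∉ V := by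
  have hne : Vᶜ.Nonempty := ⟨y, hy⟩
  obtain ⟨p, hp, hpz⟩ := hV.isClosed_compl.exists_infDist_eq_dist hne z
  refine ⟨infDist z Vᶜ, ?_, infDist_le_dist_of_mem hy, ?_, p, ?_, hp⟩
  · exact (hV.isClosed_compl.notMem_iff_infDist_pos hne).1 (not_not.2 hz)
  · simpa using ball_infDist_compl_subset (x := z) (s := V)
  · rw [mem_sphere, hpz, dist_comm]

lemma exists_isLocalMinOn_of_annulus {Ω : Set X} {w : X → ℝ} (hw : LowerSemicontinuousOn w Ω)
    {z p : X} {r R c : ℝ} (hΩ : closedBall z R ⊆ Ω) (hp : p ∈ closedBall z R \ ball z r)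
    (hwp : w p ≤ c) (hinner : ∀ x ∈ sphere z r, c < w x)
    (houter : ∀ x ∈ Ω, R < dist x z → c < w x) :
    ∃ x₁ ∈ Ω, r < dist x₁ z ∧ IsLocalMinOn w Ω x₁ := by
  have hK : IsCompact (closedBall z R \ ball z r) := (isCompact_closedBall z R).diff isOpen_ball
  obtain ⟨x₁, ⟨hx₁R, hx₁r⟩, hmin⟩ :=
    (hw.mono (sdiff_subset.trans hΩ)).exists_isMinOn ⟨p, hp⟩ hK
  have hx₁c : w x₁ ≤ c := (hmin ⟨hp.1, hp.2⟩).trans hwp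
  have hr : r < dist x₁ z := by
    refine (not_lt.1 hx₁r).lt_of_ne fun h => ?_
    exact (hinner x₁ (mem_sphere.2 h.symm)).not_ge hx₁c
  refine ⟨x₁, hΩ hx₁R, hr, ?_⟩
  filter_upwards [self_mem_nhdsWithin,
    mem_nhdsWithin_of_mem_nhds (ball_mem_nhds x₁ (sub_pos.2 hr))] with x hxΩ hx
  have hxr : r < dist x z := by
    linarith [dist_triangle x₁ x z, dist_comm x x₁, mem_ball.1 hx]
  by_cases hxR : dist x z ≤ R
  · exact hmin ⟨mem_closedBall.2 hxR, fun h => (mem_ball.1 h).not_gt hxr⟩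
  · exact hx₁c.trans (houter x hxΩ (not_le.1 hxR)).le

end Metric

lemma Fin.card_filter_sub_le_val {n k : ℕ} (hkn : k ≤ n) :
    #{i : Fin n | n - k ≤ (i : ℕ)} = k := by
  have h := card_filter_add_card_filter_not (s := univ) fun i : Fin n => (i : ℕ) < n - k
  simp only [not_lt, card_univ, Fintype.card_fin, Fin.card_filter_val_lt] at h
  omega

lemma sortedEig_eq {n : ℕ} {A : Matrix (Fin n) (Fin n) ℝ} (hA : A.IsHermitian) :
    sortedEig A = hA.eigenvalues ∘ Tuple.sort hA.eigenvalues := by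
  rw [sortedEig, dif_pos hA]

lemma monotone_sortedEig {n : ℕ} {A : Matrix (Fin n) (Fin n) ℝ} (hA : A.IsHermitian) :
    Monotone (sortedEig A) := by
  rw [sortedEig_eq hA]
  exact Tuple.monotone_sort _

lemma sum_sortedEig {n : ℕ} {A : Matrix (Fin n) (Fin n) ℝ} (hA : A.IsHermitian) :
    ∑ i, sortedEig A i = A.trace := by
  rw [hA.trace_eq_sum_eigenvalues, sortedEig_eq hA]
  exact Equiv.sum_comp (Tuple.sort hA.eigenvalues) hA.eigenvalues

lemma mul_trace_le_mul_Pplus {n k : ℕ} (hkn : k ≤ n) {A : Matrix (Fin n) (Fin n) ℝ}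
    (hA : A.IsHermitian) : (k : ℝ) * A.trace ≤ n * Pplus k A := by
  obtain rfl | hk := k.eq_zero_or_pos
  · simp [Pplus, Fin.is_lt, not_le.2]
  set μ := sortedEig A
  set T : Finset (Fin n) := {i | n - k ≤ (i : ℕ)}
  set μ₀ := μ ⟨n - k, by omega⟩
  have hP : Pplus k A = ∑ i ∈ T, μ i := by rw [Pplus, Finset.sum_filter]
  have hT : (k : ℝ) * μ₀ ≤ ∑ i ∈ T, μ i := by
    have := T.card_nsmul_le_sum μ μ₀ fun i hi =>
      monotone_sortedEig hA (Fin.mk_le_of_le_val (by simpa [T] using hi))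
    rwa [Fin.card_filter_sub_le_val hkn, nsmul_eq_mul] at this
  have hTc : ∑ i ∈ Tᶜ, μ i ≤ ((n - k : ℕ) : ℝ) * μ₀ := by
    have := Tᶜ.sum_le_card_nsmul μ μ₀ fun i hi =>
      monotone_sortedEig hA (Fin.le_def.2 (by simp [T] at hi; simp; omega))
    rwa [card_compl, Fintype.card_fin, Fin.card_filter_sub_le_val hkn, nsmul_eq_mul] at this
  have htr : ∑ i ∈ T, μ i + ∑ i ∈ Tᶜ, μ i = A.trace := by
    rw [sum_add_sum_compl, sum_sortedEig hA]
  rw [Nat.cast_sub hkn] at hTc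
  have hnk : (k : ℝ) ≤ n := by exact_mod_cast hkn
  rw [hP, ← htr]
  nlinarith [mul_le_mul_of_nonneg_left hT (sub_nonneg.2 hnk),
    mul_le_mul_of_nonneg_left hTc (Nat.cast_nonneg k)]

lemma Pplus_pos_of_trace_pos {n k : ℕ} (hk : 0 < k) (hkn : k ≤ n) {A : Matrix (Fin n) (Fin n) ℝ}
    (hA : A.IsHermitian) (htr : 0 < A.trace) : 0 < Pplus k A := by
  have := mul_trace_le_mul_Pplus hkn hA
  have hk' : (0 : ℝ) < k := by exact_mod_cast hk
  have hn : (0 : ℝ) < n := by exact_mod_cast hk.trans_le hkn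
  nlinarith [mul_pos hk' htr]

lemma isHermitian_hessianMatrix {N : ℕ} {u : EuclideanSpace ℝ (Fin N) → ℝ}
    {x : EuclideanSpace ℝ (Fin N)} (hu : ContDiffAt ℝ 2 u x) : (hessianMatrix u x).IsHermitian := by
  ext i j
  simp only [Matrix.conjTranspose_apply, star_trivial, hessianMatrix, iteratedFDeriv_two_apply,
    Matrix.cons_val_zero, Matrix.cons_val_one]
  exact hu.isSymmSndFDerivAt (by simp) _ _

noncomputable def gaussianBarrier {E : Type*} [NormedAddCommGroup E] (z : E) (α ε : ℝ) (x : E) :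
    ℝ :=
  ε * Real.exp (-α * ‖x - z‖ ^ 2)

section Normed

variable {E : Type*} [NormedAddCommGroup E]

lemma continuous_gaussianBarrier (z : E) (α ε : ℝ) : Continuous (gaussianBarrier z α ε) :=
  continuous_const.mul <| Real.continuous_exp.comp <|
    continuous_const.mul ((continuous_id.sub continuous_const).norm.pow 2)

lemma gaussianBarrier_of_mem_sphere (z : E) (α ε : ℝ) {r : ℝ} {x : E} (hx : x ∈ sphere z r) :
    gaussianBarrier z α ε x = ε * Real.exp (-α * r ^ 2) := by
  rw [gaussianBarrier, ← dist_eq_norm, mem_sphere.1 hx]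

lemma gaussianBarrier_lt {z : E} {α ε r : ℝ} (hα : 0 < α) (hε : 0 < ε) (hr : 0 ≤ r) {x : E}
    (hx : r < dist x z) : gaussianBarrier z α ε x < ε * Real.exp (-α * r ^ 2) := by
  rw [gaussianBarrier, ← dist_eq_norm]
  refine mul_lt_mul_of_pos_left (Real.exp_lt_exp.2 ?_) hε
  nlinarith [mul_lt_mul_of_pos_left (pow_lt_pow_left₀ hx hr two_ne_zero) hα]

lemma exists_isLocalMinOn_sub_gaussianBarrier [NormedSpace ℝ E] [ProperSpace E] {Ω : Set E}
    {u : E → ℝ} (hu : LowerSemicontinuousOn u Ω) {m : ℝ} (hmin : ∀ x ∈ Ω, m ≤ u x) {z p : E}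
    {ρ α : ℝ} (hρ : 0 < ρ) (hα : 0 < α) (hΩ : closedBall z ρ ⊆ Ω)
    (hball : ∀ x ∈ ball z ρ, m < u x) (hp : p ∈ sphere z ρ) (hup : u p = m) :
    ∃ ε > 0, ∃ x₁ ∈ Ω, ρ / 2 < dist x₁ z ∧
      IsLocalMinOn (fun x => u x - gaussianBarrier z α ε x) Ω x₁ := by
  have hsphere : sphere z (ρ / 2) ⊆ ball z ρ := sphere_subset_ball (by linarith)
  have hne : (sphere z (ρ / 2)).Nonempty := by
    refine ⟨midpoint ℝ z p, ?_⟩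
    rw [mem_sphere, dist_midpoint_left, dist_comm, mem_sphere.1 hp]
    norm_num
    ring
  obtain ⟨q, hq, hqmin⟩ := (hu.mono (hsphere.trans (ball_subset_closedBall.trans hΩ))).exists_isMinOn
    hne (isCompact_sphere z _)
  have hmq : m < u q := hball q (hsphere hq)
  obtain ⟨e₀, he₀⟩ : ∃ e, e = Real.exp (-α * ρ ^ 2) := ⟨_, rfl⟩
  obtain ⟨e₁, he₁⟩ : ∃ e, e = Real.exp (-α * (ρ / 2) ^ 2) := ⟨_, rfl⟩
  have he : e₀ < e₁ := by
    have := mul_pos hα (pow_pos hρ 2)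
    rw [he₀, he₁]
    exact Real.exp_lt_exp.2 (by nlinarith)
  obtain ⟨ε, hε⟩ : ∃ ε, ε = (u q - m) / (2 * (e₁ - e₀)) := ⟨_, rfl⟩
  have hεpos : 0 < ε := hε ▸ div_pos (by linarith) (by linarith)
  have hεe : ε * (e₁ - e₀) < u q - m := by
    rw [hε, div_mul_eq_mul_div, div_lt_iff₀ (by linarith)]
    nlinarith
  have hw : LowerSemicontinuousOn (fun x => u x - gaussianBarrier z α ε x) Ω := by
    simpa only [sub_eq_add_neg, Pi.neg_apply] using
      hu.add ((continuous_gaussianBarrier z α ε).neg.lowerSemicontinuous.lowerSemicontinuousOn Ω)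
  refine ⟨ε, hεpos, exists_isLocalMinOn_of_annulus hw hΩ (c := m - ε * e₀)
    ⟨sphere_subset_closedBall hp, ?_⟩ ?_ ?_ ?_⟩
  · simp [mem_sphere.1 hp, hρ.le]
  · simp [gaussianBarrier_of_mem_sphere z α ε hp, hup, he₀]
  · intro x hx
    rw [gaussianBarrier_of_mem_sphere z α ε hx, ← he₁]
    linarith [isMinOn_iff.1 hqmin x hx]
  · intro x hxΩ hx
    linarith [hmin x hxΩ, he₀ ▸ gaussianBarrier_lt hα hεpos hρ.le hx]

end Normed

section InnerProductSpace

variable {E : Type*} [NormedAddCommGroup E] [InnerProductSpace ℝ E]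

lemma contDiff_gaussianBarrier (z : E) (α ε : ℝ) : ContDiff ℝ 2 (gaussianBarrier z α ε) :=
  contDiff_const.mul (contDiff_const.mul ((contDiff_id.sub contDiff_const).norm_sq ℝ)).exp

lemma hasFDerivAt_gaussianBarrier (z : E) (α ε : ℝ) (x : E) :
    HasFDerivAt (gaussianBarrier z α ε)
      ((-2 * α * gaussianBarrier z α ε x) • innerSL ℝ (x - z)) x := by
  have h := (((((hasFDerivAt_id x).sub_const z).norm_sq).const_mul (-α)).exp).const_mul ε
  refine h.congr_fderiv ?_
  ext y
  simp [gaussianBarrier, two_smul]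
  ring

lemma fderiv_fderiv_gaussianBarrier_apply (z : E) (α ε : ℝ) (x v w : E) :
    fderiv ℝ (fderiv ℝ (gaussianBarrier z α ε)) x v w =
      gaussianBarrier z α ε x * (4 * α ^ 2 * ⟪x - z, v⟫ * ⟪x - z, w⟫ - 2 * α * ⟪v, w⟫) := by
  have hfd : fderiv ℝ (gaussianBarrier z α ε) =
      fun y => (-2 * α * gaussianBarrier z α ε y) • innerSL ℝ (y - z) :=
    funext fun y => (hasFDerivAt_gaussianBarrier z α ε y).fderiv
  have hinner : HasFDerivAt (fun y => innerSL ℝ (y - z)) (innerSL ℝ : E →L[ℝ] E →L[ℝ] ℝ) x := by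
    have h := (innerSL ℝ (E := E)).hasFDerivAt.comp x ((hasFDerivAt_id x).sub_const z)
    rwa [ContinuousLinearMap.comp_id] at h
  have h : HasFDerivAt (fun y => (-2 * α * gaussianBarrier z α ε y) • innerSL ℝ (y - z)) _ x :=
    ((hasFDerivAt_gaussianBarrier z α ε x).const_mul (-2 * α)).smul hinner
  rw [hfd, h.fderiv]
  change -2 * α * gaussianBarrier z α ε x * ⟪v, w⟫ +
    -2 * α * (-2 * α * gaussianBarrier z α ε x * ⟪x - z, v⟫) * ⟪x - z, w⟫ = _
  ring

end InnerProductSpace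

section Euclidean

variable {N : ℕ}

lemma trace_hessianMatrix_gaussianBarrier (z : EuclideanSpace ℝ (Fin N)) (α ε : ℝ)
    (x : EuclideanSpace ℝ (Fin N)) :
    (hessianMatrix (gaussianBarrier z α ε) x).trace =
      gaussianBarrier z α ε x * (4 * α ^ 2 * ‖x - z‖ ^ 2 - 2 * α * N) := by
  have hnorm : ‖x - z‖ ^ 2 = ∑ i, (x - z) i ^ 2 := by
    simp [EuclideanSpace.norm_sq_eq]
  simp only [Matrix.trace, Matrix.diag, hessianMatrix, iteratedFDeriv_two_apply,
    Matrix.cons_val_zero, Matrix.cons_val_one, fderiv_fderiv_gaussianBarrier_apply,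
    EuclideanSpace.inner_single_right, one_mul, conj_trivial, PiLp.single_apply,
    if_true]
  rw [hnorm]
  simp only [mul_sub, sum_sub_distrib, mul_sum, sum_const, card_univ, Fintype.card_fin,
    nsmul_eq_mul]
  ring_nf

lemma Pplus_hessianMatrix_gaussianBarrier_pos {k : ℕ} (hk : 0 < k) (hkN : k ≤ N)
    (z : EuclideanSpace ℝ (Fin N)) {α ε : ℝ} (hα : 0 < α) (hε : 0 < ε)
    {x : EuclideanSpace ℝ (Fin N)} (hx : N < 2 * α * ‖x - z‖ ^ 2) :
    0 < Pplus k (hessianMatrix (gaussianBarrier z α ε) x) := by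
  refine Pplus_pos_of_trace_pos hk hkN
    (isHermitian_hessianMatrix (contDiff_gaussianBarrier z α ε).contDiffAt) ?_
  rw [trace_hessianMatrix_gaussianBarrier]
  have : 0 < gaussianBarrier z α ε x := mul_pos hε (Real.exp_pos _)
  have : 0 < 4 * α ^ 2 * ‖x - z‖ ^ 2 - 2 * α * N := by nlinarith
  positivity

end Euclidean

namespace IsViscositySupersolution

variable {N k : ℕ} {Ω : Set (EuclideanSpace ℝ (Fin N))} {u : EuclideanSpace ℝ (Fin N) → ℝ}

lemma lt_of_mem_sphere (hsuper : IsViscositySupersolution (Pplus k) (fun _ => 0) Ω u)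
    (hk : 0 < k) (hkN : k ≤ N) (hu : LowerSemicontinuousOn u Ω) {m : ℝ}
    (hmin : ∀ x ∈ Ω, m ≤ u x) {z : EuclideanSpace ℝ (Fin N)} {ρ : ℝ} (hρ : 0 < ρ)
    (hΩ : closedBall z ρ ⊆ Ω) (hball : ∀ x ∈ ball z ρ, m < u x) {p : EuclideanSpace ℝ (Fin N)}
    (hp : p ∈ sphere z ρ) : m < u p := by
  refine (hmin p (hΩ (sphere_subset_closedBall hp))).lt_of_ne fun hup => ?_
  -- `α ρ² = 2N + 1` makes the barrier's Hessian trace positive where `|x - z| > ρ / 2`.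
  set α := (2 * N + 1) / ρ ^ 2
  have hα : 0 < α := by positivity
  obtain ⟨ε, hε, x₁, hx₁, hx₁z, hlocmin⟩ :=
    exists_isLocalMinOn_sub_gaussianBarrier hu hmin hρ hα hΩ hball hp hup.symm
  have hPplus := hsuper x₁ hx₁ _ (contDiff_gaussianBarrier z α ε) hlocmin
  have hx : (N : ℝ) < 2 * α * ‖x₁ - z‖ ^ 2 := by
    have hαρ : α * ρ ^ 2 = 2 * N + 1 := div_mul_cancel₀ _ (by positivity)
    rw [← dist_eq_norm]
    nlinarith [pow_lt_pow_left₀ hx₁z (by positivity) two_ne_zero]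
  linarith [Pplus_hessianMatrix_gaussianBarrier_pos hk hkN z hα hε hx]

lemma eventually_eq_of_isMinOn (hsuper : IsViscositySupersolution (Pplus k) (fun _ => 0) Ω u)
    (hk : 0 < k) (hkN : k ≤ N) (hΩ : IsOpen Ω) (hu : LowerSemicontinuousOn u Ω)
    {y : EuclideanSpace ℝ (Fin N)} (hy : y ∈ Ω) (hmin : IsMinOn u Ω y) :
    ∀ᶠ x in 𝓝 y, u x = u y := by
  obtain ⟨r, hr, hrΩ⟩ := nhds_basis_closedBall.mem_iff.1 (hΩ.mem_nhds hy)
  filter_upwards [ball_mem_nhds y (half_pos hr)] with z hz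
  by_contra hne
  have hV := hu.isOpen_inter_preimage_Ioi hΩ (u y)
  have hzΩ : z ∈ Ω :=
    hrΩ (ball_subset_closedBall.trans (closedBall_subset_closedBall (by linarith)) hz)
  have hzV : z ∈ Ω ∩ u ⁻¹' Ioi (u y) := ⟨hzΩ, (isMinOn_iff.1 hmin z hzΩ).lt_of_ne' hne⟩
  obtain ⟨ρ, hρ, hρz, hball, p, hp, hpV⟩ :=
    hV.exists_maximal_ball_subset hzV fun h => lt_irrefl (u y) h.2
  have hρΩ : closedBall z ρ ⊆ Ω :=
    (closedBall_subset_closedBall' (by linarith [mem_ball.1 hz])).trans hrΩ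
  exact hpV ⟨hρΩ (sphere_subset_closedBall hp), hsuper.lt_of_mem_sphere hk hkN hu
    (isMinOn_iff.1 hmin) hρ hρΩ (fun x hx => (hball hx).2) hp⟩

end IsViscositySupersolution

theorem statement13 (N k : ℕ) (hk : 0 < k) (hkN : k ≤ N)
    (Ω : Set (EuclideanSpace ℝ (Fin N))) (hΩ : IsOpen Ω) (hconn : IsConnected Ω)
    (u : EuclideanSpace ℝ (Fin N) → ℝ) (hlsc : LowerSemicontinuousOn u Ω)
    (hsuper : IsViscositySupersolution (Pplus k) (fun _ => 0) Ω u)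
    (x₀ : EuclideanSpace ℝ (Fin N)) (hx₀ : x₀ ∈ Ω) (hmin : ∀ x ∈ Ω, u x₀ ≤ u x) :
    ∀ x ∈ Ω, u x = u x₀ := by
  have hU : IsOpen (Ω ∩ u ⁻¹' {u x₀}) := by
    refine isOpen_iff_mem_nhds.2 fun y ⟨hy, hyx₀⟩ => ?_
    have hymin : IsMinOn u Ω y := isMinOn_iff.2 fun x hx => hyx₀ ▸ hmin x hx
    filter_upwards [hΩ.mem_nhds hy, hsuper.eventually_eq_of_isMinOn hk hkN hΩ hlsc hy hymin]
      with x hx hxy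
    exact ⟨hx, hxy.trans hyx₀⟩
  have hV := hlsc.isOpen_inter_preimage_Ioi hΩ (u x₀)
  have hdisj : Disjoint (Ω ∩ u ⁻¹' {u x₀}) (Ω ∩ u ⁻¹' Ioi (u x₀)) :=
    disjoint_left.2 fun x hxU hxV => (hxV.2 : u x₀ < u x).ne' hxU.2
  have hcover : Ω ⊆ (Ω ∩ u ⁻¹' {u x₀}) ∪ (Ω ∩ u ⁻¹' Ioi (u x₀)) := fun x hx =>
    (hmin x hx).eq_or_lt.imp (fun h => ⟨hx, h.symm⟩) fun h => ⟨hx, h⟩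
  intro x hx
  exact (hconn.isPreconnected.subset_left_of_subset_union hU hV hdisj hcover
    ⟨x₀, hx₀, hx₀, rfl⟩ hx).2
end
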